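/- For n ≥ 2, replacing the attributes m_1 and m_2 of K^1_n by the single ∃-generalized attribute m_12 with extension m_1' ∪ m_2' increases the number of formal concepts by exactly 2^{n−1} − 1; that is, |𝔅(K^1_{n,ge})| − |𝔅(K^1_n)| = 2^{n−1} − 1. -/

import Mathlib

/-- The intent (attribute derivation) of a set of objects. -/
def intentOf {G M : Type*} (I : G → M → Prop) (A : Set G) : Set M :=
  {m | ∀ g ∈ A, I g m}

/-- The extent (object derivation) of a set of attributes. -/
def extentOf {G M : Type*} (I : G → M → Prop) (B : Set M) : Set G :=
  {g | ∀ m ∈ B, I g m}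

/-- The formal concepts of a context: pairs `(A, B)` with `A' = B` and `B' = A`. -/
def Concepts {G M : Type*} (I : G → M → Prop) : Set (Set G × Set M) :=
  {p | intentOf I p.1 = p.2 ∧ extentOf I p.2 = p.1}

/-- The context `K¹_n = (S_n ∪ {g_1}, S_n ∪ {m_1, m_2}, I)`: objects are
`Fin n ⊕ Unit` (with `Sum.inr () = g_1`, and `i : Fin n` coding the element
`i+1` of `S_n = {1,…,n}`); attributes are `Fin n ⊕ Bool` (with
`Sum.inr false = m_1` and `Sum.inr true = m_2`); `m_1' = {1}` and
`m_2' = S_n \ {1}`. -/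
def K1 (n : ℕ) : (Fin n ⊕ Unit) → (Fin n ⊕ Bool) → Prop
  | Sum.inl g, Sum.inl m => g ≠ m
  | Sum.inr _, Sum.inl _ => True
  | Sum.inl g, Sum.inr false => (g : ℕ) = 0
  | Sum.inl g, Sum.inr true => (g : ℕ) ≠ 0
  | Sum.inr _, Sum.inr _ => False

/-- The ∃-generalized context `K¹_{n,ge} = (S_n ∪ {g_1}, S_n ∪ {m_12}, J)`:
the two attributes `m_1, m_2` are replaced by a single attribute
`m_12 = Sum.inr ()` whose extension is `m_1' ∪ m_2' = S_n`; `J` agrees with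
`I` on the attributes in `S_n`. -/
def K1ge (n : ℕ) : (Fin n ⊕ Unit) → (Fin n ⊕ Unit) → Prop
  | Sum.inl g, Sum.inl m => g ≠ m
  | Sum.inr _, Sum.inl _ => True
  | Sum.inl _, Sum.inr _ => True
  | Sum.inr _, Sum.inr _ => False

/-!
A concept is determined by its extent, so we count closed sets of objects. Merging `m_1, m_2`
into `m_12` turns `K¹_n` into the contranominal scale `≠` on `S_n ∪ {g_1}`, where all `2^(n+1)`
sets of objects are closed. In `K¹_n` each object of `S_n` is still the only object lacking its
own attribute, so a set of objects is closed iff it contains `g_1` or lies in `m_1' = {1}` or in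
`m_2' = S_n \ {1}`; there are `2^n + 2^(n-1) + 1` such sets.
-/

section FormalConcept

variable {G M : Type*} (I : G → M → Prop)

def conceptsEquivClosedExtents :
    Concepts I ≃ {A : Set G // extentOf I (intentOf I A) = A} where
  toFun p := ⟨p.1.1, by rw [p.2.1, p.2.2]⟩
  invFun A := ⟨(A.1, intentOf I A.1), rfl, A.2⟩
  left_inv := by
    rintro ⟨⟨A, B⟩, hA, -⟩
    exact Subtype.ext (Prod.ext rfl hA)
  right_inv _ := rfl

theorem subset_extentOf_intentOf (A : Set G) : A ⊆ extentOf I (intentOf I A) :=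
  fun _ hg _ hm => hm _ hg

theorem extentOf_intentOf_eq_iff {A : Set G} :
    extentOf I (intentOf I A) = A ↔ ∀ g ∉ A, ∃ m, (∀ a ∈ A, I a m) ∧ ¬ I g m := by
  rw [Set.Subset.antisymm_iff, and_iff_left (subset_extentOf_intentOf I A)]
  refine ⟨fun hA g hg => ?_, fun hA g hg => ?_⟩
  · by_contra! hsep
    exact hg (hA fun m hm => hsep m hm)
  · by_contra hgA
    obtain ⟨m, hAm, hgm⟩ := hA g hgA
    exact hgm (hg m hAm)

theorem extentOf_intentOf_eq_iff_of_forall_ne {g₀ : G}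
    (h : ∀ g ≠ g₀, ∃ m, ∀ g', I g' m ↔ g' ≠ g) {A : Set G} :
    extentOf I (intentOf I A) = A ↔ g₀ ∈ A ∨ ∃ m, ¬ I g₀ m ∧ ∀ a ∈ A, I a m := by
  rw [extentOf_intentOf_eq_iff]
  constructor
  · intro hA
    by_cases hg₀ : g₀ ∈ A
    · exact .inl hg₀
    · obtain ⟨m, hAm, hm⟩ := hA g₀ hg₀
      exact .inr ⟨m, hm, hAm⟩
  · intro hA g hg
    by_cases hgg₀ : g = g₀
    · subst hgg₀
      obtain hg₀ | ⟨m, hm, hAm⟩ := hA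
      · exact absurd hg₀ hg
      · exact ⟨m, hAm, hm⟩
    · obtain ⟨m, hm⟩ := h g hgg₀
      exact ⟨m, fun a ha => (hm a).2 (ne_of_mem_of_not_mem ha hg), fun hgm => (hm g).1 hgm rfl⟩

theorem intentOf_ne {α : Type*} (A : Set α) : intentOf (· ≠ ·) A = Aᶜ := by
  ext m
  simp only [intentOf, Set.mem_ofPred_eq, Set.mem_compl_iff]
  exact ⟨fun h hm => h m hm rfl, fun h g hg hgm => h (hgm ▸ hg)⟩

theorem extentOf_ne {α : Type*} (B : Set α) : extentOf (· ≠ ·) B = Bᶜ := by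
  ext g
  simp only [extentOf, Set.mem_ofPred_eq, Set.mem_compl_iff]
  exact ⟨fun h hg => h g hg rfl, fun h m hm hgm => h (hgm ▸ hm)⟩

theorem card_concepts_ne {α : Type*} [Fintype α] :
    Nat.card (Concepts (fun a b : α => a ≠ b)) = 2 ^ Fintype.card α := by
  rw [Nat.card_congr (conceptsEquivClosedExtents _)]
  simp only [intentOf_ne, extentOf_ne, compl_compl]
  rw [Nat.card_congr (Equiv.subtypeUnivEquiv fun _ => trivial)]
  simp

end FormalConcept

theorem K1ge_eq_ne (n : ℕ) : K1ge n = (· ≠ ·) := by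
  funext g m
  cases g <;> cases m <;> simp [K1ge]

theorem card_concepts_K1ge (n : ℕ) : Nat.card (Concepts (K1ge n)) = 2 ^ (n + 1) := by
  rw [K1ge_eq_ne, card_concepts_ne]
  simp

section K1

variable {k : ℕ}

/-- The extents of `K¹_{k+1}`: those containing `g_1`, the subsets of `m_2' = S_{k+1} \ {1}`
(indexed through `Fin.succ`), and `m_1' = {1}`. -/
def k1Extent : Set (Fin (k + 1)) ⊕ Set (Fin k) ⊕ Unit → Set (Fin (k + 1) ⊕ Unit)
  | .inl X => Sum.inl '' X ∪ {Sum.inr ()}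
  | .inr (.inl Y) => Sum.inl '' (Fin.succ '' Y)
  | .inr (.inr ()) => {Sum.inl 0}

open Classical in
noncomputable def k1ExtentIndex (A : Set (Fin (k + 1) ⊕ Unit)) :
    Set (Fin (k + 1)) ⊕ Set (Fin k) ⊕ Unit :=
  if Sum.inr () ∈ A then .inl (Sum.inl ⁻¹' A)
  else if Sum.inl 0 ∈ A then .inr (.inr ())
  else .inr (.inl ((Sum.inl ∘ Fin.succ) ⁻¹' A))

theorem k1Extent_injective : Function.Injective (k1Extent (k := k)) := by
  refine Function.LeftInverse.injective (g := k1ExtentIndex) fun t => ?_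
  rcases t with X | Y | ⟨⟩ <;> simp [k1Extent, k1ExtentIndex] <;> ext <;> simp

theorem K1_extentOf_intentOf_eq_iff {A : Set (Fin (k + 1) ⊕ Unit)} :
    extentOf (K1 (k + 1)) (intentOf (K1 (k + 1)) A) = A ↔ A ∈ Set.range k1Extent := by
  have hsep : ∀ g ≠ Sum.inr (), ∃ m, ∀ g', K1 (k + 1) g' m ↔ g' ≠ g := by
    rintro (i | ⟨⟩) hi
    · exact ⟨Sum.inl i, by rintro (j | ⟨⟩) <;> simp [K1]⟩
    · exact absurd rfl hi
  rw [extentOf_intentOf_eq_iff_of_forall_ne _ hsep]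
  constructor
  · rintro (hg₁ | ⟨m, hm, hAm⟩)
    · refine ⟨.inl (Sum.inl ⁻¹' A), ?_⟩
      ext (i | ⟨⟩) <;> simp [k1Extent, hg₁]
    · rcases m with j | _ | _
      · simp [K1] at hm
      · have hA : A ⊆ {Sum.inl 0} := by
          rintro (i | ⟨⟩) hi
          · simpa [K1] using hAm _ hi
          · exact (hAm _ hi).elim
        obtain rfl | rfl := Set.subset_singleton_iff_eq.1 hA
        · exact ⟨.inr (.inl ∅), by simp [k1Extent]⟩
        · exact ⟨.inr (.inr ()), rfl⟩
      · have hA : A ⊆ Set.range (Sum.inl ∘ Fin.succ) := by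
          rintro (i | ⟨⟩) hi
          · simpa [K1, Fin.exists_succ_eq] using hAm _ hi
          · exact (hAm _ hi).elim
        obtain ⟨Y, rfl⟩ := Set.subset_range_iff_exists_image_eq.1 hA
        exact ⟨.inr (.inl Y), (Set.image_comp _ _ _).symm⟩
  · rintro ⟨X | Y | ⟨⟩, rfl⟩
    · exact .inl (by simp [k1Extent])
    · exact .inr ⟨.inr true, by simp [K1], by simp [k1Extent, K1]⟩
    · exact .inr ⟨.inr false, by simp [K1], by simp [k1Extent, K1]⟩

end K1

theorem card_concepts_K1 (k : ℕ) :
    Nat.card (Concepts (K1 (k + 1))) = 2 ^ (k + 1) + (2 ^ k + 1) := by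
  rw [Nat.card_congr (conceptsEquivClosedExtents _)]
  simp_rw [K1_extentOf_intentOf_eq_iff]
  refine (Nat.card_range_of_injective k1Extent_injective).trans ?_
  simp

/-- For `n ≥ 2`, the ∃-generalization of `m_1` and `m_2` in `K¹_n` increases
the number of formal concepts by exactly `2^(n-1) - 1`. -/
theorem stmt11 (n : ℕ) (hn : 2 ≤ n) :
    (Nat.card (Concepts (K1ge n)) : ℤ) - Nat.card (Concepts (K1 n)) =
      2 ^ (n - 1) - 1 := by
  obtain ⟨k, rfl⟩ : ∃ k, n = k + 1 := ⟨n - 1, by omega⟩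
  rw [card_concepts_K1ge, card_concepts_K1, Nat.add_sub_cancel]
  push_cast
  ring
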